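/- arXiv:1810.10428 — 4 statements merged into one kernel-verified Lean document; each statement's English description precedes it below -/
import Mathlib

section
/- Fix an integer k ≥ 2 and let f_ℓ(n) be defined by the recurrence f_ℓ(0) = 1, f_ℓ(n) = 0 for n < 0, and f_ℓ(n) = Σ_{i=1}^{ℓ+1} ((ℓ+2−i)k − 1) f_i(n−i) for n ≥ 1. Then for all ℓ ≥ 1 and n ≥ 1: f_{ℓ+1}(n) − f_ℓ(n) = (k − 1) · f_{ℓ+2}(n − ℓ − 2) + k · Σ_{i=1}^{ℓ+1} f_i(n − i). -/
/-- `f` satisfies the defining recurrence of the numbers `f_ℓ(n)` of row-convex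
`k`-omino towers over a platform: `f_ℓ(0) = 1`, `f_ℓ(n) = 0` for `n < 0`, and
`f_ℓ(n) = Σ_{i=1}^{ℓ+1} ((ℓ+2−i)k − 1) · f_i(n−i)` for `n ≥ 1` (all for `ℓ ≥ 1`). -/
def SatisfiesRec (k : ℕ) (f : ℕ → ℤ → ℚ) : Prop :=
  (∀ ℓ : ℕ, 1 ≤ ℓ → f ℓ 0 = 1) ∧
  (∀ ℓ : ℕ, 1 ≤ ℓ → ∀ n : ℤ, n < 0 → f ℓ n = 0) ∧
  (∀ ℓ : ℕ, 1 ≤ ℓ → ∀ n : ℤ, 1 ≤ n →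
    f ℓ n = ∑ i ∈ Finset.Icc 1 (ℓ + 1), (((ℓ + 2 - i) * k - 1 : ℕ) : ℚ) * f i (n - i))

/-- For all `ℓ ≥ 1` and `n ≥ 1`:
`f_{ℓ+1}(n) − f_ℓ(n) = (k − 1) · f_{ℓ+2}(n − ℓ − 2) + k · Σ_{i=1}^{ℓ+1} f_i(n − i)`. -/
theorem f_first_difference (k : ℕ) (hk : 2 ≤ k) (f : ℕ → ℤ → ℚ)
    (hf : SatisfiesRec k f) (ℓ : ℕ) (hℓ : 1 ≤ ℓ) (n : ℤ) (hn : 1 ≤ n) :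
    f (ℓ + 1) n - f ℓ n =
      ((k : ℚ) - 1) * f (ℓ + 2) (n - ℓ - 2) +
        (k : ℚ) * ∑ i ∈ Finset.Icc 1 (ℓ + 1), f i (n - i) := by
  obtain ⟨h0, hneg, hrec⟩ := hf
  rw [hrec (ℓ + 1) (by omega) n hn, hrec ℓ hℓ n hn]
  rw [Finset.sum_Icc_succ_top (show 1 ≤ ℓ + 1 + 1 by omega)]
  have htop : (((ℓ + 1 + 2 - (ℓ + 1 + 1)) * k - 1 : ℕ) : ℚ) = (k : ℚ) - 1 := by
    have : ℓ + 1 + 2 - (ℓ + 1 + 1) = 1 := by omega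
    rw [this, one_mul]
    push_cast [show 1 ≤ k by omega]
    ring
  have harg : n - ((ℓ + 1 + 1 : ℕ) : ℤ) = n - ℓ - 2 := by push_cast; ring
  rw [htop, harg]
  rw [Finset.mul_sum,
    show ∀ a b c : ℚ, a + b - c = (a - c) + b from fun a b c => by ring,
    ← Finset.sum_sub_distrib]
  have hsum : ∑ x ∈ Finset.Icc 1 (ℓ + 1),
      ((((ℓ + 1 + 2 - x) * k - 1 : ℕ) : ℚ) * f x (n - x)
        - (((ℓ + 2 - x) * k - 1 : ℕ) : ℚ) * f x (n - x))
      = ∑ i ∈ Finset.Icc 1 (ℓ + 1), (k : ℚ) * f i (n - i) := by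
    apply Finset.sum_congr rfl
    intro i hi
    rw [Finset.mem_Icc] at hi
    have hcoef : ((ℓ + 1 + 2 - i) * k - 1 : ℕ) = ((ℓ + 2 - i) * k - 1) + k := by
      have h1 : ℓ + 1 + 2 - i = (ℓ + 2 - i) + 1 := by omega
      rw [h1, add_mul, one_mul]
      have hm : 1 ≤ (ℓ + 2 - i) * k := by
        have : 1 ≤ ℓ + 2 - i := by omega
        nlinarith
      omega
    rw [hcoef]
    push_cast
    ring
  rw [hsum, add_comm]
end

section
/- Fix an integer k ≥ 2 and let f_ℓ(n) be defined by the recurrence f_ℓ(0) = 1, f_ℓ(n) = 0 for n < 0, and f_ℓ(n) = Σ_{i=1}^{ℓ+1} ((ℓ+2−i)k − 1) f_i(n−i) for n ≥ 1. Then for all ℓ ≥ 1 and n ≥ 0: f_{ℓ+2}(n) − 2 f_{ℓ+1}(n) + f_ℓ(n) = (k − 1) · f_{ℓ+3}(n − ℓ − 3) + f_{ℓ+2}(n − ℓ − 2). -/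
/-- For all `ℓ ≥ 1` and `n ≥ 0`:
`f_{ℓ+2}(n) − 2 f_{ℓ+1}(n) + f_ℓ(n) = (k − 1) · f_{ℓ+3}(n − ℓ − 3) + f_{ℓ+2}(n − ℓ − 2)`. -/
theorem f_second_difference (k : ℕ) (hk : 2 ≤ k) (f : ℕ → ℤ → ℚ)
    (hf : SatisfiesRec k f) (ℓ : ℕ) (hℓ : 1 ≤ ℓ) (n : ℤ) (hn : 0 ≤ n) :
    f (ℓ + 2) n - 2 * f (ℓ + 1) n + f ℓ n =
      ((k : ℚ) - 1) * f (ℓ + 3) (n - ℓ - 3) + f (ℓ + 2) (n - ℓ - 2) := by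
  obtain ⟨h0, hneg, hrec⟩ := hf
  have key : ∀ m : ℕ, 1 ≤ m → (((m * k - 1 : ℕ)) : ℚ) = m * k - 1 := by
    intro m hm
    have h1 : 1 ≤ m * k := le_trans (by omega) (Nat.mul_le_mul hm (le_refl k))
    rw [Nat.cast_sub h1]
    push_cast
    ring
  rcases eq_or_lt_of_le hn with h | hn1
  · -- n = 0
    rw [← h]
    rw [h0 (ℓ + 2) (by omega), h0 (ℓ + 1) (by omega), h0 ℓ hℓ,
      hneg (ℓ + 3) (by omega) _ (by linarith [ (Nat.cast_nonneg ℓ : (0:ℤ) ≤ ℓ) ]),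
      hneg (ℓ + 2) (by omega) _ (by linarith [ (Nat.cast_nonneg ℓ : (0:ℤ) ≤ ℓ) ])]
    ring
  · -- n ≥ 1
    have hn1' : 1 ≤ n := hn1
    rw [hrec (ℓ + 2) (by omega) n hn1', hrec (ℓ + 1) (by omega) n hn1',
      hrec ℓ hℓ n hn1']
    have e2 : ∑ i ∈ Finset.Icc 1 (ℓ + 2 + 1),
        (((ℓ + 2 + 2 - i) * k - 1 : ℕ) : ℚ) * f i (n - i) =
        (∑ i ∈ Finset.Icc 1 (ℓ + 1),
          (((ℓ + 4 - i) * k - 1 : ℕ) : ℚ) * f i (n - i)) +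
        (((2 * k - 1 : ℕ) : ℚ) * f (ℓ + 2) (n - ((ℓ + 2 : ℕ) : ℤ)) +
          (((k - 1 : ℕ) : ℚ)) * f (ℓ + 3) (n - ((ℓ + 2 + 1 : ℕ) : ℤ))) := by
      rw [Finset.sum_Icc_succ_top (by omega), Finset.sum_Icc_succ_top (by omega)]
      have h1 : (ℓ + 2 + 2 - (ℓ + 2)) * k - 1 = 2 * k - 1 := by
        have h : ℓ + 2 + 2 - (ℓ + 2) = 2 := by omega
        rw [h]
      have h2 : (ℓ + 2 + 2 - (ℓ + 2 + 1)) * k - 1 = k - 1 := by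
        have : ℓ + 2 + 2 - (ℓ + 2 + 1) = 1 := by omega
        rw [this, one_mul]
      rw [h1, h2]
      have hc : ∀ i ∈ Finset.Icc 1 (ℓ + 1),
          (((ℓ + 2 + 2 - i) * k - 1 : ℕ) : ℚ) * f i (n - i) =
          (((ℓ + 4 - i) * k - 1 : ℕ) : ℚ) * f i (n - i) := by
        intro i hi
        have h : ℓ + 2 + 2 - i = ℓ + 4 - i := by omega
        rw [h]
      rw [Finset.sum_congr rfl hc]
      ring
    have e1 : ∑ i ∈ Finset.Icc 1 (ℓ + 1 + 1),
        (((ℓ + 1 + 2 - i) * k - 1 : ℕ) : ℚ) * f i (n - i) =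
        (∑ i ∈ Finset.Icc 1 (ℓ + 1),
          (((ℓ + 3 - i) * k - 1 : ℕ) : ℚ) * f i (n - i)) +
        (((k - 1 : ℕ) : ℚ)) * f (ℓ + 2) (n - ((ℓ + 1 + 1 : ℕ) : ℤ)) := by
      rw [Finset.sum_Icc_succ_top (by omega)]
      have h1 : (ℓ + 1 + 2 - (ℓ + 1 + 1)) * k - 1 = k - 1 := by
        have : ℓ + 1 + 2 - (ℓ + 1 + 1) = 1 := by omega
        rw [this, one_mul]
      rw [h1]
    rw [e2, e1]
    have main : (∑ i ∈ Finset.Icc 1 (ℓ + 1),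
          (((ℓ + 4 - i) * k - 1 : ℕ) : ℚ) * f i (n - i)) -
        2 * (∑ i ∈ Finset.Icc 1 (ℓ + 1),
          (((ℓ + 3 - i) * k - 1 : ℕ) : ℚ) * f i (n - i)) +
        (∑ i ∈ Finset.Icc 1 (ℓ + 1),
          (((ℓ + 2 - i) * k - 1 : ℕ) : ℚ) * f i (n - i)) = 0 := by
      rw [Finset.mul_sum, ← Finset.sum_sub_distrib, ← Finset.sum_add_distrib]
      apply Finset.sum_eq_zero
      intro i hi
      simp only [Finset.mem_Icc] at hi
      rw [key (ℓ + 4 - i) (by omega), key (ℓ + 3 - i) (by omega),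
        key (ℓ + 2 - i) (by omega),
        Nat.cast_sub (by omega : i ≤ ℓ + 4), Nat.cast_sub (by omega : i ≤ ℓ + 3),
        Nat.cast_sub (by omega : i ≤ ℓ + 2)]
      push_cast
      ring
    have hk1 : ((k - 1 : ℕ) : ℚ) = (k : ℚ) - 1 := by
      rw [Nat.cast_sub (by omega)]; push_cast; ring
    have h2k : ((2 * k - 1 : ℕ) : ℚ) = 2 * (k : ℚ) - 1 := by
      rw [Nat.cast_sub (by omega)]; push_cast; ring
    have harg3 : n - (ℓ : ℤ) - 3 = n - ((ℓ + 2 + 1 : ℕ) : ℤ) := by push_cast; ring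
    have harg2 : n - (ℓ : ℤ) - 2 = n - ((ℓ + 2 : ℕ) : ℤ) := by push_cast; ring
    have harg2' : n - ((ℓ + 1 + 1 : ℕ) : ℤ) = n - ((ℓ + 2 : ℕ) : ℤ) := by push_cast; ring
    rw [hk1, h2k, harg3, harg2, harg2']
    linear_combination main
end

section
/- Fix an integer k ≥ 2, let f_ℓ(n) be defined by the recurrence f_ℓ(0) = 1, f_ℓ(n) = 0 for n < 0, f_ℓ(n) = Σ_{i=1}^{ℓ+1} ((ℓ+2−i)k − 1) f_i(n−i) for n ≥ 1, and let F_ℓ = Σ_{n=0}^∞ f_ℓ(n) z^n ∈ ℚ[[z]]. Then for all ℓ ≥ 1: F_{ℓ+2} − 2 F_{ℓ+1} + F_ℓ = z^{ℓ+2} F_{ℓ+2} + (k − 1) z^{ℓ+3} F_{ℓ+3}. -/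
/-- `F_ℓ = Σ_{n≥0} f_ℓ(n) zⁿ ∈ ℚ[[z]]`. -/
noncomputable def Fgen (f : ℕ → ℤ → ℚ) (ℓ : ℕ) : PowerSeries ℚ :=
  PowerSeries.mk fun n => f ℓ (n : ℤ)

/-!
Write the recurrence as `f_ℓ(n) = ∑_{i + j = ℓ + 2, i, j ≥ 1} (j k - 1) f_i(n - i)`. The weight
`j k - 1` is affine in `j`, so the second difference in `ℓ` cancels every term except the two new
ones, `i = ℓ + 2` with weight `(2k - 1) - 2 (k - 1) = 1` and `i = ℓ + 3` with weight `k - 1`.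
This is the identity of coefficients of `zⁿ` for `n ≥ 1`; for `n = 0` both sides vanish.
-/

open Finset PowerSeries

section Convolution

variable {R : Type*} [CommRing R]

def convPos (c g : ℕ → R) (m : ℕ) : R :=
  ∑ i ∈ Icc 1 (m + 1), c (m + 2 - i) * g i

theorem convPos_second_difference_of_affine {c : ℕ → R} {a b : R}
    (hc : ∀ j, 1 ≤ j → c j = a * j + b) (g : ℕ → R) (m : ℕ) :
    convPos c g (m + 2) - 2 * convPos c g (m + 1) + convPos c g m =
      -b * g (m + 2) + (a + b) * g (m + 3) := by
  have hcancel : ∀ i ∈ Icc 1 (m + 1),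
      c (m + 2 + 2 - i) * g i - 2 * (c (m + 1 + 2 - i) * g i) + c (m + 2 - i) * g i = 0 := by
    intro i hi
    obtain ⟨hi1, hi2⟩ := mem_Icc.mp hi
    rw [hc _ (by omega), hc _ (by omega), hc _ (by omega), Nat.cast_sub (by omega),
      Nat.cast_sub (by omega), Nat.cast_sub (by omega)]
    push_cast
    ring
  have hinner := sum_eq_zero hcancel
  rw [sum_add_distrib, sum_sub_distrib, ← mul_sum] at hinner
  simp only [convPos]
  rw [sum_Icc_succ_top (show 1 ≤ m + 2 + 1 by omega),
    sum_Icc_succ_top (show 1 ≤ m + 1 + 1 by omega),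
    sum_Icc_succ_top (show 1 ≤ m + 1 + 1 by omega),
    show m + 2 + 2 - (m + 1 + 1) = 2 by omega, show m + 2 + 2 - (m + 2 + 1) = 1 by omega,
    show m + 1 + 2 - (m + 1 + 1) = 1 by omega, hc 2 (by norm_num), hc 1 le_rfl]
  push_cast
  linear_combination hinner

end Convolution

theorem natCast_mul_sub_one {R : Type*} [Ring R] {j k : ℕ} (hj : 1 ≤ j) (hk : 1 ≤ k) :
    ((j * k - 1 : ℕ) : R) = k * j + -1 := by
  rw [Nat.cast_sub (Nat.mul_pos hj hk), Nat.cast_mul, Nat.cast_comm, Nat.cast_one,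
    sub_eq_add_neg]

theorem coeff_X_pow_mul_Fgen {f : ℕ → ℤ → ℚ} {ℓ : ℕ} (hneg : ∀ n : ℤ, n < 0 → f ℓ n = 0)
    (m n : ℕ) : coeff n (X ^ m * Fgen f ℓ) = f ℓ (n - m) := by
  rw [coeff_X_pow_mul', Fgen, coeff_mk]
  split_ifs with h
  · rw [Nat.cast_sub h]
  · exact (hneg _ (by omega)).symm

namespace SatisfiesRec

variable {k : ℕ} {f : ℕ → ℤ → ℚ}

theorem eq_convPos (hf : SatisfiesRec k f) {ℓ : ℕ} (hℓ : 1 ≤ ℓ) {n : ℤ} (hn : 1 ≤ n) :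
    f ℓ n = convPos (fun j => ((j * k - 1 : ℕ) : ℚ)) (fun i => f i (n - i)) ℓ :=
  hf.2.2 ℓ hℓ n hn

theorem second_difference (hf : SatisfiesRec k f) (hk : 1 ≤ k) {ℓ : ℕ} (hℓ : 1 ≤ ℓ) (n : ℕ) :
    f (ℓ + 2) n - 2 * f (ℓ + 1) n + f ℓ n =
      f (ℓ + 2) (n - (ℓ + 2 : ℕ)) + (k - 1) * f (ℓ + 3) (n - (ℓ + 3 : ℕ)) := by
  rcases Nat.eq_zero_or_pos n with rfl | hn_pos
  · rw [Nat.cast_zero, hf.1 _ (by omega), hf.1 _ (by omega), hf.1 _ hℓ,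
      hf.2.1 _ (by omega) _ (by omega), hf.2.1 _ (by omega) _ (by omega)]
    ring
  · have hn : (1 : ℤ) ≤ n := by exact_mod_cast hn_pos
    rw [hf.eq_convPos (by omega) hn, hf.eq_convPos (by omega) hn, hf.eq_convPos hℓ hn,
      convPos_second_difference_of_affine (fun j hj => natCast_mul_sub_one hj hk)]
    push_cast
    ring

end SatisfiesRec

/-- For all `ℓ ≥ 1`:
`F_{ℓ+2} − 2 F_{ℓ+1} + F_ℓ = z^{ℓ+2} F_{ℓ+2} + (k − 1) z^{ℓ+3} F_{ℓ+3}`. -/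
theorem F_recurrence (k : ℕ) (hk : 2 ≤ k) (f : ℕ → ℤ → ℚ)
    (hf : SatisfiesRec k f) (ℓ : ℕ) (hℓ : 1 ≤ ℓ) :
    Fgen f (ℓ + 2) - 2 * Fgen f (ℓ + 1) + Fgen f ℓ =
      (PowerSeries.X : PowerSeries ℚ) ^ (ℓ + 2) * Fgen f (ℓ + 2) +
        PowerSeries.C (R := ℚ) ((k : ℚ) - 1) * (PowerSeries.X : PowerSeries ℚ) ^ (ℓ + 3) *
          Fgen f (ℓ + 3) := by
  ext n
  rw [mul_assoc, two_mul, map_add, map_add, map_sub, map_add, coeff_C_mul,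
    coeff_X_pow_mul_Fgen (hf.2.1 _ (by omega)), coeff_X_pow_mul_Fgen (hf.2.1 _ (by omega))]
  simp only [Fgen, coeff_mk]
  linear_combination hf.second_difference (by omega) hℓ n
end

section
/- Fix an integer k ≥ 2. For j ≥ 0 set (z;z)_j = ∏_{i=1}^{j} (1 − z^i) and h_j = z^{j(j+1)} · ∏_{i=1}^{j} (1 + (k−1) z^i), and for ℓ ≥ 1 define A_ℓ = Σ_{j=0}^∞ z^{ℓj} h_j (z;z)_j^{−2} ∈ ℚ[[z]]. Then for all ℓ ≥ 1: A_{ℓ+2} − 2 A_{ℓ+1} + A_ℓ = z^{ℓ+2} A_{ℓ+2} + (k − 1) z^{ℓ+3} A_{ℓ+3}. -/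
/-- The `q`-Pochhammer symbol `(z;z)_j = ∏_{i=1}^{j} (1 − zⁱ)` in `ℚ[[z]]`. -/
noncomputable def qPoch (j : ℕ) : PowerSeries ℚ :=
  ∏ i ∈ Finset.Icc 1 j, (1 - (PowerSeries.X : PowerSeries ℚ) ^ i)

/-- `h_j = z^{j(j+1)} · ((1−k)z; z)_j = z^{j(j+1)} · ∏_{i=1}^{j} (1 + (k−1) zⁱ)`. -/
noncomputable def hSer (k j : ℕ) : PowerSeries ℚ :=
  (PowerSeries.X : PowerSeries ℚ) ^ (j * (j + 1)) *
    ∏ i ∈ Finset.Icc 1 j, (1 + PowerSeries.C ((k : ℚ) - 1) * PowerSeries.X ^ i)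

/-- The `j`-th summand `z^{ℓj} h_j (z;z)_j^{−2}` of `A_ℓ`. -/
noncomputable def Aterm (k ℓ j : ℕ) : PowerSeries ℚ :=
  (PowerSeries.X : PowerSeries ℚ) ^ (ℓ * j) * hSer k j * ((qPoch j)⁻¹) ^ 2

/-- `A_ℓ = Σ_{j=0}^∞ z^{ℓj} h_j (z;z)_j^{−2}`.  The series converges in the `z`-adic
topology since `h_j` is divisible by `z^{j(j+1)}`; the coefficient of `zⁿ` only receives
contributions from the finitely many `j ≤ n`, so the sum may be truncated there. -/
noncomputable def Aser (k ℓ : ℕ) : PowerSeries ℚ :=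
  PowerSeries.mk fun n =>
    ∑ j ∈ Finset.range (n + 1), PowerSeries.coeff n (Aterm k ℓ j)

/-- The factor `ℓ + Σ_{m=1}^{j} (1 + 2(1 − z^m)^{−1} − (1 + (k−1) z^m)^{−1})`. -/
noncomputable def Bfactor (k ℓ j : ℕ) : PowerSeries ℚ :=
  (ℓ : PowerSeries ℚ) +
    ∑ m ∈ Finset.Icc 1 j,
      (1 + 2 * ((1 - (PowerSeries.X : PowerSeries ℚ) ^ m)⁻¹) -
        ((1 + PowerSeries.C ((k : ℚ) - 1) * PowerSeries.X ^ m)⁻¹))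

/-- The `j`-th summand of `B_ℓ`. -/
noncomputable def Bterm (k ℓ j : ℕ) : PowerSeries ℚ :=
  Aterm k ℓ j * Bfactor k ℓ j

/-- `B_ℓ = Σ_{j=0}^∞ z^{ℓj} h_j (z;z)_j^{−2} ·
(ℓ + Σ_{m=1}^{j} (1 + 2(1 − z^m)^{−1} − (1 + (k−1) z^m)^{−1}))`, the series converging
`z`-adically since `h_j` is divisible by `z^{j(j+1)}`. -/
noncomputable def Bser (k ℓ : ℕ) : PowerSeries ℚ :=
  PowerSeries.mk fun n =>
    ∑ j ∈ Finset.range (n + 1), PowerSeries.coeff n (Bterm k ℓ j)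

/-!
Each `A_ℓ` is a sum over `j` and the identity holds summand by summand, after a shift of `j`.
The second difference in `ℓ` of the `(j+1)`-th summand of `A_ℓ` carries the factor
`(1 - z^{j+1})²`, which turns `(z;z)_{j+1}^{-2}` into `(z;z)_j^{-2}`, and
`h_{j+1} = z^{2(j+1)} (1 + (k-1) z^{j+1}) h_j`; together they give the `j`-th summand of the
right-hand side. The `j = 0` summands of `A_ℓ` all equal `1`, so their second difference vanishes.
-/

open PowerSeries

theorem PowerSeries.eq_of_forall_trunc_eq {R : Type*} [CommSemiring R] {f g : R⟦X⟧}
    (h : ∀ N, trunc N f = trunc N g) : f = g := by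
  ext n
  rw [← coeff_coe_trunc_of_lt (Nat.lt_succ_self n), h,
    coeff_coe_trunc_of_lt (Nat.lt_succ_self n)]

lemma qPoch_succ (j : ℕ) : qPoch (j + 1) = qPoch j * (1 - (X : ℚ⟦X⟧) ^ (j + 1)) := by
  rw [qPoch, qPoch, Finset.prod_Icc_succ_top (by omega)]

lemma one_sub_X_pow_mul_inv_qPoch_succ (j : ℕ) :
    (1 - (X : ℚ⟦X⟧) ^ (j + 1)) * (qPoch (j + 1))⁻¹ = (qPoch j)⁻¹ := by
  rw [qPoch_succ, PowerSeries.mul_inv_rev, ← mul_assoc,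
    PowerSeries.mul_inv_cancel _ (by simp), one_mul]

lemma hSer_succ (k j : ℕ) :
    hSer k (j + 1) =
      (X : ℚ⟦X⟧) ^ (2 * (j + 1)) * (1 + C ((k : ℚ) - 1) * X ^ (j + 1)) * hSer k j := by
  rw [hSer, hSer, Finset.prod_Icc_succ_top (by omega)]
  ring

lemma X_pow_dvd_Aterm (k ℓ j : ℕ) : (X : ℚ⟦X⟧) ^ j ∣ Aterm k ℓ j := by
  have hj : j ≤ j * (j + 1) := Nat.le_mul_of_pos_right j j.succ_pos
  exact ((pow_dvd_pow X hj).trans (dvd_mul_right _ _)).mul_left _ |>.mul_right _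

lemma Aterm_zero (k ℓ : ℕ) : Aterm k ℓ 0 = 1 := by
  simp [Aterm, hSer, qPoch]

lemma Aterm_second_difference (k ℓ j : ℕ) :
    Aterm k (ℓ + 2) (j + 1) - 2 * Aterm k (ℓ + 1) (j + 1) + Aterm k ℓ (j + 1) =
      (X : ℚ⟦X⟧) ^ (ℓ + 2) * Aterm k (ℓ + 2) j +
        C ((k : ℚ) - 1) * X ^ (ℓ + 3) * Aterm k (ℓ + 3) j := by
  simp only [Aterm, hSer_succ]
  linear_combination ((X : ℚ⟦X⟧) ^ (ℓ * (j + 1)) * X ^ (2 * (j + 1)) *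
      (1 + C ((k : ℚ) - 1) * X ^ (j + 1)) * hSer k j *
      ((1 - X ^ (j + 1)) * (qPoch (j + 1))⁻¹ + (qPoch j)⁻¹)) *
    one_sub_X_pow_mul_inv_qPoch_succ j

noncomputable def Apartial (k ℓ N : ℕ) : ℚ⟦X⟧ :=
  ∑ j ∈ Finset.range N, Aterm k ℓ j

lemma Apartial_second_difference (k ℓ N : ℕ) :
    Apartial k (ℓ + 2) (N + 1) - 2 * Apartial k (ℓ + 1) (N + 1) + Apartial k ℓ (N + 1) =
      (X : ℚ⟦X⟧) ^ (ℓ + 2) * Apartial k (ℓ + 2) N +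
        C ((k : ℚ) - 1) * X ^ (ℓ + 3) * Apartial k (ℓ + 3) N := by
  simp only [Apartial, Finset.sum_range_succ', Aterm_zero, Finset.mul_sum,
    ← Finset.sum_add_distrib, ← Aterm_second_difference]
  simp only [Finset.sum_add_distrib, Finset.sum_sub_distrib, ← Finset.mul_sum]
  ring

lemma trunc_Aser_eq_trunc_Apartial (k ℓ : ℕ) {N M : ℕ} (hNM : N ≤ M) :
    trunc N (Aser k ℓ) = trunc N (Apartial k ℓ M) := by
  ext n
  rw [coeff_trunc, coeff_trunc]
  split_ifs with hn
  · rw [Aser, coeff_mk, Apartial, map_sum]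
    refine Finset.sum_subset (Finset.range_subset_range.2 (by omega)) fun j _ hj => ?_
    exact X_pow_dvd_iff.1 (X_pow_dvd_Aterm k ℓ j) n (by simpa using hj)
  · rfl

lemma trunc_mul_Aser (k ℓ N : ℕ) (f : ℚ⟦X⟧) :
    trunc N (f * Aser k ℓ) = trunc N (f * Apartial k ℓ N) := by
  rw [← trunc_mul_trunc, trunc_Aser_eq_trunc_Apartial k ℓ le_rfl, trunc_mul_trunc]

theorem A_solves_recurrence_general (k : ℕ) (ℓ : ℕ) :
    Aser k (ℓ + 2) - 2 * Aser k (ℓ + 1) + Aser k ℓ =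
      (PowerSeries.X : PowerSeries ℚ) ^ (ℓ + 2) * Aser k (ℓ + 2) +
        PowerSeries.C ((k : ℚ) - 1) * (PowerSeries.X : PowerSeries ℚ) ^ (ℓ + 3) *
          Aser k (ℓ + 3) := by
  refine PowerSeries.eq_of_forall_trunc_eq fun N => ?_
  have hA := fun m => trunc_Aser_eq_trunc_Apartial k m (Nat.le_succ N)
  calc trunc N (Aser k (ℓ + 2) - 2 * Aser k (ℓ + 1) + Aser k ℓ)
      = trunc N (Apartial k (ℓ + 2) (N + 1) - 2 * Apartial k (ℓ + 1) (N + 1) +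
          Apartial k ℓ (N + 1)) := by
        simp only [map_add, map_sub, two_mul, hA]
    _ = trunc N (X ^ (ℓ + 2) * Apartial k (ℓ + 2) N +
          C ((k : ℚ) - 1) * X ^ (ℓ + 3) * Apartial k (ℓ + 3) N) := by
        rw [Apartial_second_difference]
    _ = _ := by simp only [map_add, trunc_mul_Aser]

/-- For all `ℓ ≥ 1`:
`A_{ℓ+2} − 2 A_{ℓ+1} + A_ℓ = z^{ℓ+2} A_{ℓ+2} + (k − 1) z^{ℓ+3} A_{ℓ+3}`. -/
theorem A_solves_recurrence (k : ℕ) (hk : 2 ≤ k) (ℓ : ℕ) (hℓ : 1 ≤ ℓ) :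
    Aser k (ℓ + 2) - 2 * Aser k (ℓ + 1) + Aser k ℓ =
      (PowerSeries.X : PowerSeries ℚ) ^ (ℓ + 2) * Aser k (ℓ + 2) +
        PowerSeries.C ((k : ℚ) - 1) * (PowerSeries.X : PowerSeries ℚ) ^ (ℓ + 3) *
          Aser k (ℓ + 3) :=
  A_solves_recurrence_general k ℓ
end
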